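/- arXiv:1412.6821 — 3 statements merged into one kernel-verified Lean document; each statement's English description precedes it below -/
import Mathlib

section
/- Stability of the persistence scale space kernel: let F, G be finite multisets in ℝ² (above the diagonal), σ > 0, and let γ be any bijective matching between F ∪ Δ_F and G ∪ Δ_G obtained by augmenting with diagonal points so the multisets have equal size. Then ‖Φ_σ(F) - Φ_σ(G)‖_{L²(ℝ²)} ≤ (1/(2σ√π)) Σ_u ‖u - γ(u)‖₂, where the sum is over the augmented multiset. -/
open MeasureTheory Real

noncomputable def mk2 (a b : ℝ) : EuclideanSpace ℝ (Fin 2) :=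
  (WithLp.equiv 2 (Fin 2 → ℝ)).symm ![a, b]

/-- Reflection of a point across the diagonal. -/
noncomputable def pbar (p : EuclideanSpace ℝ (Fin 2)) : EuclideanSpace ℝ (Fin 2) :=
  mk2 (p 1) (p 0)

/-- The persistence scale space feature map. -/
noncomputable def Phi (σ : ℝ) (D : Multiset (EuclideanSpace ℝ (Fin 2)))
    (x : EuclideanSpace ℝ (Fin 2)) : ℝ :=
  (1 / (4 * π * σ)) *
    (D.map (fun p => Real.exp (-‖x - p‖ ^ 2 / (4 * σ)) -
      Real.exp (-‖x - pbar p‖ ^ 2 / (4 * σ)))).sum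

/-!
Write `g_p(x) = exp (-‖x - p‖² / (4σ))`, so that `Φ_σ(D)` is `1/(4πσ)` times the sum over `p ∈ D`
of `ψ_p = g_p - g_{p̄}`, viewed in `L²`. Diagonal points have `ψ_p = 0`, so both diagrams may be
replaced by their augmentations, and the difference becomes the sum of `ψ_u - ψ_{γ(u)}` over the
matching. Gaussian integrals give `⟪g_p, g_q⟫ = 2πσ exp (-‖p - q‖² / (8σ))` in the plane, hence
`‖g_p - g_q‖² = 4πσ (1 - exp (-‖p - q‖² / (8σ))) ≤ (π/2) ‖p - q‖²`. Since the reflection is an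
isometry, `p ↦ ψ_p` is `2√(π/2)`-Lipschitz, and the triangle inequality gives the bound with the
sharper constant `1/(2σ√(2π))`.
-/

open Module

theorem MeasureTheory.Lp.coeFn_multiset_sum {α ι E : Type*} [MeasurableSpace α]
    {μ : Measure α} [NormedAddCommGroup E] {p : ENNReal} (s : Multiset ι)
    (f : ι → Lp E p μ) (g : ι → α → E) (h : ∀ i, ⇑(f i) =ᵐ[μ] g i) :
    ⇑(s.map f).sum =ᵐ[μ] fun x => (s.map fun i => g i x).sum := by
  induction s using Multiset.induction with
  | empty => exact Lp.coeFn_zero E p μ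
  | cons i s ih =>
    simp only [Multiset.map_cons, Multiset.sum_cons]
    filter_upwards [Lp.coeFn_add (f i) (s.map f).sum, h i, ih] with x hx hi hs
    rw [hx, Pi.add_apply, hi, hs]

theorem MeasureTheory.L2.sqrt_integral_sq_eq_norm {α : Type*} [MeasurableSpace α]
    {μ : Measure α} (h : Lp ℝ 2 μ) {f : α → ℝ} (hf : ⇑h =ᵐ[μ] f) :
    √(∫ x, f x ^ 2 ∂μ) = ‖h‖ := by
  have : ∫ x, f x ^ 2 ∂μ = ‖h‖ ^ 2 := by
    rw [← real_inner_self_eq_norm_sq, L2.inner_def]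
    refine integral_congr_ae ?_
    filter_upwards [hf] with x hx
    simp [hx, sq]
  rw [this, sqrt_sq (norm_nonneg h)]

theorem norm_sum_map_sub_sum_map_le {E F : Type*} [SeminormedAddCommGroup E]
    [SeminormedAddCommGroup F] {ψ : E → F} {K : ℝ} (hψ : ∀ u v, ‖ψ u - ψ v‖ ≤ K * ‖u - v‖)
    (M : Multiset (E × E)) :
    ‖((M.map Prod.fst).map ψ).sum - ((M.map Prod.snd).map ψ).sum‖ ≤
      K * (M.map fun uv => ‖uv.1 - uv.2‖).sum := by
  rw [Multiset.map_map, Multiset.map_map, ← Multiset.sum_map_sub, ← Multiset.sum_map_mul_left]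
  refine (norm_multiset_sum_le _).trans ?_
  rw [Multiset.map_map]
  exact Multiset.sum_map_le_sum_map _ _ fun uv _ => hψ uv.1 uv.2

section Gaussian

variable {V : Type*} [NormedAddCommGroup V]

noncomputable def gaussian (σ : ℝ) (p x : V) : ℝ := exp (-‖x - p‖ ^ 2 / (4 * σ))

theorem continuous_gaussian (σ : ℝ) (p : V) : Continuous (gaussian σ p) := by
  unfold gaussian; fun_prop

variable [InnerProductSpace ℝ V]

/-- The exponents combine by Apollonius' theorem `‖x - p‖² + ‖x - q‖² = 2‖x - m‖² + ‖p - q‖² / 2`,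
`m` the midpoint of `p` and `q`. -/
theorem gaussian_mul_gaussian (σ : ℝ) (p q x : V) :
    gaussian σ p x * gaussian σ q x =
      exp (-‖p - q‖ ^ 2 / (8 * σ)) * exp (-(2 * σ)⁻¹ * ‖x - midpoint ℝ p q‖ ^ 2) := by
  have h := EuclideanGeometry.dist_sq_add_dist_sq_eq_two_mul_dist_midpoint_sq_add_half_dist_sq
    x p q
  simp only [dist_eq_norm] at h
  rw [gaussian, gaussian, ← exp_add, ← exp_add]
  congr 1
  linear_combination (-(4 * σ)⁻¹) * h

variable [FiniteDimensional ℝ V] [MeasurableSpace V] [BorelSpace V]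

theorem integral_exp_neg_mul_norm_sub_sq {b : ℝ} (hb : 0 < b) (m : V) :
    ∫ x : V, exp (-b * ‖x - m‖ ^ 2) = (π / b) ^ (finrank ℝ V / 2 : ℝ) := by
  rw [integral_sub_right_eq_self (fun x : V => exp (-b * ‖x‖ ^ 2)) m,
    GaussianFourier.integral_rexp_neg_mul_sq_norm hb]

theorem integrable_exp_neg_mul_norm_sub_sq {b : ℝ} (hb : 0 < b) (m : V) :
    Integrable (fun x : V => exp (-b * ‖x - m‖ ^ 2)) :=
  Integrable.of_integral_ne_zero <| by
    rw [integral_exp_neg_mul_norm_sub_sq hb]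
    have := pi_pos
    positivity

variable {σ : ℝ}

theorem integral_gaussian_mul_gaussian (hσ : 0 < σ) (p q : V) :
    ∫ x : V, gaussian σ p x * gaussian σ q x =
      (2 * π * σ) ^ (finrank ℝ V / 2 : ℝ) * exp (-‖p - q‖ ^ 2 / (8 * σ)) := by
  simp_rw [gaussian_mul_gaussian]
  rw [integral_const_mul, integral_exp_neg_mul_norm_sub_sq (by positivity), div_inv_eq_mul,
    mul_comm]
  congr 2
  ring

theorem memLp_gaussian (hσ : 0 < σ) (p : V) : MemLp (gaussian σ p) 2 := by
  refine (memLp_two_iff_integrable_sq (continuous_gaussian σ p).aestronglyMeasurable).2 ?_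
  simp_rw [sq, gaussian_mul_gaussian]
  exact (integrable_exp_neg_mul_norm_sub_sq (by positivity) _).const_mul _

noncomputable def gaussianLp (hσ : 0 < σ) (p : V) : Lp ℝ 2 (volume : Measure V) :=
  (memLp_gaussian hσ p).toLp

theorem inner_gaussianLp (hσ : 0 < σ) (p q : V) :
    inner ℝ (gaussianLp hσ p) (gaussianLp hσ q) =
      (2 * π * σ) ^ (finrank ℝ V / 2 : ℝ) * exp (-‖p - q‖ ^ 2 / (8 * σ)) := by
  rw [L2.inner_def, ← integral_gaussian_mul_gaussian hσ]
  refine integral_congr_ae ?_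
  filter_upwards [(memLp_gaussian hσ p).coeFn_toLp, (memLp_gaussian hσ q).coeFn_toLp]
    with x hp hq
  rw [gaussianLp, gaussianLp, hp, hq, real_inner_eq_re_inner, RCLike.inner_apply]
  simp [mul_comm]

theorem norm_gaussianLp_sub_sq (hσ : 0 < σ) (p q : V) :
    ‖gaussianLp hσ p - gaussianLp hσ q‖ ^ 2 =
      2 * (2 * π * σ) ^ (finrank ℝ V / 2 : ℝ) * (1 - exp (-‖p - q‖ ^ 2 / (8 * σ))) := by
  rw [norm_sub_sq_real, ← real_inner_self_eq_norm_sq, ← real_inner_self_eq_norm_sq,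
    inner_gaussianLp, inner_gaussianLp, inner_gaussianLp]
  simp only [sub_self, norm_zero]
  norm_num
  ring

theorem norm_gaussianLp_sub_sq_le (hσ : 0 < σ) (p q : V) :
    ‖gaussianLp hσ p - gaussianLp hσ q‖ ^ 2 ≤
      (2 * π * σ) ^ (finrank ℝ V / 2 : ℝ) / (4 * σ) * ‖p - q‖ ^ 2 := by
  have h := add_one_le_exp (-(‖p - q‖ ^ 2 / (8 * σ)))
  have hC : 0 ≤ (2 * π * σ) ^ (finrank ℝ V / 2 : ℝ) := by have := pi_pos; positivity
  rw [norm_gaussianLp_sub_sq, neg_div]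
  calc _ ≤ 2 * (2 * π * σ) ^ (finrank ℝ V / 2 : ℝ) * (‖p - q‖ ^ 2 / (8 * σ)) := by
        gcongr; linarith
    _ = _ := by field_simp; ring

theorem norm_gaussianLp_sub_le_of_finrank_eq_two (hV : finrank ℝ V = 2) (hσ : 0 < σ)
    (p q : V) : ‖gaussianLp hσ p - gaussianLp hσ q‖ ≤ √(π / 2) * ‖p - q‖ := by
  have h := norm_gaussianLp_sub_sq_le hσ p q
  rw [hV, Nat.cast_ofNat, div_self two_ne_zero, rpow_one,
    show 2 * π * σ / (4 * σ) = π / 2 by field_simp; ring] at h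
  rw [← sqrt_sq (norm_nonneg (p - q)), ← sqrt_mul (by positivity)]
  exact le_sqrt_of_sq_le h

end Gaussian

section Persistence

local notation "ℝ²" => EuclideanSpace ℝ (Fin 2)

theorem pbar_eq_self {p : ℝ²} (h : p 0 = p 1) : pbar p = p := by
  ext i
  fin_cases i <;> simp [pbar, mk2, h]

theorem norm_pbar_sub_pbar (u v : ℝ²) : ‖pbar u - pbar v‖ = ‖u - v‖ := by
  simp only [EuclideanSpace.norm_eq, Fin.sum_univ_two, pbar, mk2]
  simp [add_comm]

variable {σ : ℝ} (hσ : 0 < σ)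

noncomputable def persistenceLp (p : ℝ²) : Lp ℝ 2 (volume : Measure ℝ²) :=
  gaussianLp hσ p - gaussianLp hσ (pbar p)

theorem persistenceLp_eq_zero {p : ℝ²} (h : p 0 = p 1) : persistenceLp hσ p = 0 := by
  rw [persistenceLp, pbar_eq_self h, sub_self]

theorem norm_persistenceLp_sub_le (u v : ℝ²) :
    ‖persistenceLp hσ u - persistenceLp hσ v‖ ≤ 2 * √(π / 2) * ‖u - v‖ := by
  have hV : finrank ℝ ℝ² = 2 := finrank_euclideanSpace_fin
  calc ‖persistenceLp hσ u - persistenceLp hσ v‖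
      = ‖(gaussianLp hσ u - gaussianLp hσ v) -
          (gaussianLp hσ (pbar u) - gaussianLp hσ (pbar v))‖ := by
        rw [persistenceLp, persistenceLp]; abel_nf
    _ ≤ √(π / 2) * ‖u - v‖ + √(π / 2) * ‖pbar u - pbar v‖ :=
        (norm_sub_le _ _).trans (add_le_add
          (norm_gaussianLp_sub_le_of_finrank_eq_two hV hσ u v)
          (norm_gaussianLp_sub_le_of_finrank_eq_two hV hσ _ _))
    _ = 2 * √(π / 2) * ‖u - v‖ := by rw [norm_pbar_sub_pbar]; ring

noncomputable def PhiLp (D : Multiset ℝ²) : Lp ℝ 2 (volume : Measure ℝ²) :=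
  (1 / (4 * π * σ)) • (D.map (persistenceLp hσ)).sum

theorem coeFn_PhiLp (D : Multiset ℝ²) : ⇑(PhiLp hσ D) =ᵐ[volume] Phi σ D := by
  have hψ (p : ℝ²) : ⇑(persistenceLp hσ p) =ᵐ[volume]
      fun x => gaussian σ p x - gaussian σ (pbar p) x :=
    (Lp.coeFn_sub _ _).trans
      ((memLp_gaussian hσ p).coeFn_toLp.sub (memLp_gaussian hσ (pbar p)).coeFn_toLp)
  rw [PhiLp]
  filter_upwards [Lp.coeFn_smul (1 / (4 * π * σ)) (D.map (persistenceLp hσ)).sum,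
    Lp.coeFn_multiset_sum D _ _ hψ] with x hx hs
  rw [hx, Pi.smul_apply, hs, smul_eq_mul, Phi]
  rfl

theorem PhiLp_add_of_diag (F : Multiset ℝ²) {D : Multiset ℝ²} (hD : ∀ p ∈ D, p 0 = p 1) :
    PhiLp hσ (F + D) = PhiLp hσ F := by
  have hD0 : (D.map (persistenceLp hσ)).sum = 0 :=
    Multiset.sum_eq_zero (by simpa using fun p hp => persistenceLp_eq_zero hσ (hD p hp))
  rw [PhiLp, PhiLp, Multiset.map_add, Multiset.sum_add, hD0, add_zero]

theorem norm_PhiLp_sub_le (M : Multiset (ℝ² × ℝ²)) :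
    ‖PhiLp hσ (M.map Prod.fst) - PhiLp hσ (M.map Prod.snd)‖ ≤
      1 / (4 * π * σ) * (2 * √(π / 2)) * (M.map fun uv => ‖uv.1 - uv.2‖).sum := by
  rw [PhiLp, PhiLp, ← smul_sub, norm_smul, Real.norm_of_nonneg (by positivity)]
  exact (mul_le_mul_of_nonneg_left (norm_sum_map_sub_sum_map_le (norm_persistenceLp_sub_le hσ) M)
    (by positivity)).trans_eq (mul_assoc _ _ _).symm

end Persistence

/-- stability of the feature map w.r.t. the 1-Wasserstein matching cost.
The matching γ is encoded by a multiset M of pairs whose first (resp. second) components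
enumerate the augmented diagram F' ⊇ F (resp. G' ⊇ G), the added points lying on the diagonal. -/
theorem Phi_stability (σ : ℝ) (hσ : 0 < σ)
    (F G F' G' : Multiset (EuclideanSpace ℝ (Fin 2)))
    (M : Multiset (EuclideanSpace ℝ (Fin 2) × EuclideanSpace ℝ (Fin 2)))
    (hF : ∃ DF, F' = F + DF ∧ ∀ p ∈ DF, p 0 = p 1)
    (hG : ∃ DG, G' = G + DG ∧ ∀ p ∈ DG, p 0 = p 1)
    (hM1 : M.map Prod.fst = F') (hM2 : M.map Prod.snd = G') :
    Real.sqrt (∫ x : EuclideanSpace ℝ (Fin 2), (Phi σ F x - Phi σ G x) ^ 2)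
      ≤ (1 / (2 * σ * Real.sqrt π)) * (M.map (fun uv => ‖uv.1 - uv.2‖)).sum := by
  obtain ⟨DF, rfl, hDF⟩ := hF
  obtain ⟨DG, rfl, hDG⟩ := hG
  have hae : ⇑(PhiLp hσ F - PhiLp hσ G) =ᵐ[volume] fun x => Phi σ F x - Phi σ G x :=
    (Lp.coeFn_sub _ _).trans ((coeFn_PhiLp hσ F).sub (coeFn_PhiLp hσ G))
  rw [L2.sqrt_integral_sq_eq_norm _ hae, ← PhiLp_add_of_diag hσ F hDF,
    ← PhiLp_add_of_diag hσ G hDG, ← hM1, ← hM2]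
  refine (norm_PhiLp_sub_le hσ M).trans ?_
  gcongr ?_ * _
  · exact Multiset.sum_nonneg fun _ h => by
      obtain ⟨uv, -, rfl⟩ := Multiset.mem_map.1 h
      exact norm_nonneg _
  have hπ := pi_pos
  have hsqrt : √(π / 2) * √π ≤ π := by
    rw [← sqrt_mul (by positivity), sqrt_le_iff]
    constructor <;> nlinarith
  rw [div_mul_eq_mul_div, one_mul, div_le_div_iff₀ (by positivity) (by positivity)]
  nlinarith
end

section
/- If F is a finite nonempty multiset of points strictly above the diagonal in ℝ², then k_σ(F,F) > 0, where k_σ(F,G) = (1/(8πσ)) Σ_{p∈F, q∈G} (exp(-‖p-q‖²/(8σ)) - exp(-‖p-q̄‖²/(8σ))). -/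
/-!
With `g(p) = exp (-‖p‖² / 8σ)` and `‖p - q‖² = ‖p‖² + ‖q‖² - 2⟪p, q⟫`, the number
`16πσ · k_σ(F, F)` is the energy `∑ μ(x) μ(y) exp (⟪x, y⟫ / 4σ)` of the signed measure
`μ = ∑_{p ∈ F} g(p) (δ_p - δ_{p̄})`. Expanding the exponential, and `⟪x, y⟫ ^ k` by the binomial
theorem, writes this energy as a series of squared moments `∫ x₀ ^ a x₁ ^ b dμ` with positive
coefficients. Some moment is nonzero: otherwise `μ` would annihilate every polynomial, in particular
one vanishing at all atoms of `μ` except a point of `F`, where `μ` has positive mass because the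
reflected points all lie below the diagonal.
-/

open Real

/-- The persistence scale space kernel. -/
noncomputable def kPSS (σ : ℝ) (F G : Multiset (EuclideanSpace ℝ (Fin 2))) : ℝ :=
  (1 / (8 * π * σ)) *
    (F.map (fun p => (G.map (fun q =>
      Real.exp (-‖p - q‖ ^ 2 / (8 * σ)) -
        Real.exp (-‖p - pbar q‖ ^ 2 / (8 * σ)))).sum)).sum

open Finset MvPolynomial
open scoped InnerProductSpace

local notation "ℝ²" => EuclideanSpace ℝ (Fin 2)

lemma Multiset.sum_map_eq_sum_coe {α β : Type*} [DecidableEq α] [AddCommMonoid β]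
    (m : Multiset α) (f : α → β) : (m.map f).sum = ∑ x : m, f x := by
  rw [← Multiset.map_univ]; rfl

lemma EuclideanSpace.inner_fin_two (x y : ℝ²) : ⟪x, y⟫_ℝ = x 0 * y 0 + x 1 * y 1 := by
  simp [PiLp.inner_apply, Fin.sum_univ_two, mul_comm]

lemma exp_neg_norm_sub_sq_div {E : Type*} [NormedAddCommGroup E] [InnerProductSpace ℝ E]
    (x y : E) (s : ℝ) :
    exp (-‖x - y‖ ^ 2 / s) = exp (-‖x‖ ^ 2 / s) * exp (-‖y‖ ^ 2 / s) * exp (2 / s * ⟪x, y⟫_ℝ) := by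
  rw [← exp_add, ← exp_add, norm_sub_sq_real]; ring_nf

section WeightedMoments

variable {ι : Type*} [Fintype ι] (w : ι → ℝ) (x : ι → ℝ²)

def weightedMoment (a b : ℕ) : ℝ := ∑ i, w i * x i 0 ^ a * x i 1 ^ b

lemma sum_sum_mul_inner_pow (k : ℕ) :
    ∑ i, ∑ j, w i * w j * ⟪x i, x j⟫_ℝ ^ k =
      ∑ m ∈ range (k + 1), (k.choose m : ℝ) * weightedMoment w x m (k - m) ^ 2 := by
  simp_rw [weightedMoment, sq, sum_mul_sum, mul_sum, EuclideanSpace.inner_fin_two, add_pow,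
    mul_sum]
  rw [sum_congr rfl fun i _ => sum_comm, sum_comm]
  refine sum_congr rfl fun m _ => sum_congr rfl fun i _ => sum_congr rfl fun j _ => ?_
  ring

lemma hasSum_sum_sum_mul_exp_inner (c : ℝ) :
    HasSum (fun k => c ^ k / k.factorial *
        ∑ m ∈ range (k + 1), (k.choose m : ℝ) * weightedMoment w x m (k - m) ^ 2)
      (∑ i, ∑ j, w i * w j * exp (c * ⟪x i, x j⟫_ℝ)) := by
  have hexp (t : ℝ) : HasSum (fun k => (t ^ k / k.factorial : ℝ)) (exp t) := by
    rw [exp_eq_exp_ℝ]; exact NormedSpace.expSeries_div_hasSum_exp t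
  have := hasSum_sum fun i (_ : i ∈ univ) => hasSum_sum fun j (_ : j ∈ univ) =>
    (hexp (c * ⟪x i, x j⟫_ℝ)).mul_left (w i * w j)
  refine this.congr_fun fun k => ?_
  rw [← sum_sum_mul_inner_pow, mul_sum]
  simp_rw [mul_sum, mul_pow]
  refine sum_congr rfl fun i _ => sum_congr rfl fun j _ => ?_
  ring

theorem sum_sum_mul_exp_inner_pos {c : ℝ} (hc : 0 < c) {a b : ℕ}
    (hab : weightedMoment w x a b ≠ 0) :
    0 < ∑ i, ∑ j, w i * w j * exp (c * ⟪x i, x j⟫_ℝ) := by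
  refine hasSum_lt (f := 0) (i := a + b) (fun k => ?_) ?_ hasSum_zero
    (hasSum_sum_sum_mul_exp_inner w x c)
  · have := sum_nonneg fun m (_ : m ∈ range (k + 1)) =>
      mul_nonneg (Nat.cast_nonneg (k.choose m)) (sq_nonneg (weightedMoment w x m (k - m)))
    exact mul_nonneg (by positivity) this
  · refine mul_pos (by positivity) (sum_pos' (fun m _ => by positivity) ⟨a, by simp, ?_⟩)
    rw [Nat.add_sub_cancel_left]
    have := Nat.choose_pos (Nat.le_add_right a b)
    positivity

lemma sum_mul_eval_eq_zero_of_weightedMoment_eq_zero (h : ∀ a b, weightedMoment w x a b = 0)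
    (P : MvPolynomial (Fin 2) ℝ) : ∑ i, w i * eval (x i) P = 0 := by
  simp_rw [eval_eq', Fin.prod_univ_two, mul_sum]
  rw [sum_comm]
  refine sum_eq_zero fun d _ => ?_
  calc ∑ i, w i * (P.coeff d * (x i 0 ^ d 0 * x i 1 ^ d 1))
      = P.coeff d * weightedMoment w x (d 0) (d 1) := by
        rw [weightedMoment, mul_sum]; exact sum_congr rfl fun i _ => by ring
    _ = 0 := by rw [h, mul_zero]

theorem exists_weightedMoment_ne_zero {u : ℝ²} (hu : ∑ i with x i = u, w i ≠ 0) :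
    ∃ a b, weightedMoment w x a b ≠ 0 := by
  by_contra! hmoment
  set s := (univ.image x).erase u
  let Q : MvPolynomial (Fin 2) ℝ := ∏ v ∈ s, ((X 0 - C (v 0)) ^ 2 + (X 1 - C (v 1)) ^ 2)
  have hQ (y : ℝ²) : eval y Q = ∏ v ∈ s, ((y 0 - v 0) ^ 2 + (y 1 - v 1) ^ 2) := by
    simp [Q, map_prod]
  have hQu : 0 < eval u Q := by
    rw [hQ]
    refine prod_pos fun v hv => ?_
    have hvu : v ≠ u := ne_of_mem_erase hv
    by_cases h0 : u 0 = v 0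
    · have : u 1 - v 1 ≠ 0 := sub_ne_zero.2 fun h1 => hvu (by ext i; fin_cases i <;> simp [*])
      positivity
    · have : u 0 - v 0 ≠ 0 := sub_ne_zero.2 h0
      positivity
  have hsum : ∑ i, w i * eval (x i) Q = (∑ i with x i = u, w i) * eval u Q := by
    rw [sum_mul, sum_filter, sum_congr rfl fun i _ => ?_]
    split_ifs with hi
    · rw [hi]
    · rw [hQ, prod_eq_zero (mem_erase.2 ⟨hi, mem_image_of_mem x (mem_univ i)⟩) (by ring),
        mul_zero]
  have := sum_mul_eval_eq_zero_of_weightedMoment_eq_zero w x hmoment Q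
  rw [hsum] at this
  exact hu ((mul_eq_zero.1 this).resolve_right hQu.ne')

end WeightedMoments

lemma pbar_apply_zero (p : ℝ²) : pbar p 0 = p 1 := by simp [pbar, mk2]

lemma pbar_apply_one (p : ℝ²) : pbar p 1 = p 0 := by simp [pbar, mk2]

lemma pbar_pbar (p : ℝ²) : pbar (pbar p) = p := by
  ext i; fin_cases i <;> simp [pbar_apply_zero, pbar_apply_one]

lemma inner_pbar_left (p q : ℝ²) : ⟪pbar p, q⟫_ℝ = ⟪p, pbar q⟫_ℝ := by
  simp only [EuclideanSpace.inner_fin_two, pbar_apply_zero, pbar_apply_one]; ring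

lemma norm_pbar (p : ℝ²) : ‖pbar p‖ = ‖p‖ := by
  rw [norm_eq_sqrt_real_inner, norm_eq_sqrt_real_inner, inner_pbar_left, pbar_pbar]

section Diagram

variable (σ : ℝ) (F : Multiset ℝ²)

-- The signed measure `∑_{p ∈ F} exp (-‖p‖² / 8σ) (δ_p - δ_{p̄})`, as a family indexed by `F ⊕ F`.
noncomputable def diagramWeight : F ⊕ F → ℝ :=
  Sum.elim (fun p => exp (-‖(p : ℝ²)‖ ^ 2 / (8 * σ))) (fun p => -exp (-‖(p : ℝ²)‖ ^ 2 / (8 * σ)))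

noncomputable def diagramPoint : F ⊕ F → ℝ² := Sum.elim (fun p => p) (fun p => pbar p)

lemma kPSS_self_eq :
    kPSS σ F F = 1 / (16 * π * σ) * ∑ i, ∑ j, diagramWeight σ F i * diagramWeight σ F j *
      exp (2 / (8 * σ) * ⟪diagramPoint F i, diagramPoint F j⟫_ℝ) := by
  simp only [kPSS, Multiset.sum_map_eq_sum_coe, exp_neg_norm_sub_sq_div _ _ (8 * σ), norm_pbar,
    Fintype.sum_sum_type, diagramWeight, diagramPoint, Sum.elim_inl, Sum.elim_inr,
    inner_pbar_left, pbar_pbar, ← sum_add_distrib, mul_sum]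
  refine sum_congr rfl fun p _ => sum_congr rfl fun q _ => ?_
  ring

lemma diagramWeight_mass_pos (hF : ∀ p ∈ F, p 0 < p 1) (p₀ : F) :
    0 < ∑ i with diagramPoint F i = p₀, diagramWeight σ F i := by
  have hreflect (p : F) : pbar p ≠ p₀ := fun h => by
    have := hF p Multiset.coe_mem
    have := hF p₀ Multiset.coe_mem
    rw [← h, pbar_apply_zero, pbar_apply_one] at this
    linarith
  rw [sum_filter, Fintype.sum_sum_type]
  simp only [diagramPoint, diagramWeight, Sum.elim_inl, Sum.elim_inr, hreflect, if_false,
    sum_const_zero, add_zero]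
  exact sum_pos' (fun p _ => by split_ifs <;> positivity) ⟨p₀, mem_univ _, by simp [exp_pos]⟩

end Diagram

/-- k_σ(F,F) > 0 for nonempty diagrams strictly above the diagonal. -/
theorem kPSS_self_pos (σ : ℝ) (hσ : 0 < σ)
    (F : Multiset (EuclideanSpace ℝ (Fin 2)))
    (hne : F ≠ 0) (hF : ∀ p ∈ F, p 0 < p 1) :
    0 < kPSS σ F F := by
  obtain ⟨p₀⟩ : Nonempty F :=
    Fintype.card_pos_iff.1 (by rwa [Multiset.card_coe, Multiset.card_pos])
  obtain ⟨a, b, hab⟩ := exists_weightedMoment_ne_zero (diagramWeight σ F) (diagramPoint F)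
    (diagramWeight_mass_pos σ F hF p₀).ne'
  rw [kPSS_self_eq]
  exact mul_pos (by positivity) (sum_sum_mul_exp_inner_pos _ _ (by positivity) hab)
end

section
/- The persistence scale space kernel is positive definite: for any finite collection F₁, …, F_m of finite multisets in ℝ² and any c₁, …, c_m ∈ ℝ, Σ_{i,j} c_i c_j k_σ(F_i, F_j) ≥ 0, where k_σ(F,G) = (1/(8πσ)) Σ_{p∈F, q∈G} (exp(-‖p-q‖²/(8σ)) - exp(-‖p-q̄‖²/(8σ))). -/
open Real

/-!
With `g_a(x) = exp(-‖x - a‖² / (4σ))`, completing the square at the midpoint of `a` and `b` gives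
`∫ g_a g_b = (2πσ)^(d/2) exp(-‖a - b‖² / (8σ))`. Since the reflection `q ↦ q̄` is an isometric
involution, the four cross terms of `∫ (g_p - g_p̄)(g_q - g_q̄)` pair up, and `k_σ(F, G)` is a positive
multiple of the `L²` inner product of `Φ(F) = ∑_{p ∈ F} (g_p - g_p̄)` and `Φ(G)`. A Gram quadratic form
`∑ c_i c_j ⟨Φ_i, Φ_j⟩ = ‖∑ c_i Φ_i‖²` is nonnegative.
-/

open MeasureTheory

namespace MeasureTheory

variable {α : Type*} [MeasurableSpace α] {μ : Measure α}

theorem sum_sum_mul_integral_mul_nonneg {ι : Type*} (s : Finset ι) (f : ι → α → ℝ) (c : ι → ℝ)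
    (hf : ∀ i j, Integrable (fun x => f i x * f j x) μ) :
    0 ≤ ∑ i ∈ s, ∑ j ∈ s, c i * c j * ∫ x, f i x * f j x ∂μ := by
  have hterm : ∀ i j, Integrable (fun x => c i * f i x * (c j * f j x)) μ := fun i j =>
    ((hf i j).const_mul (c i * c j)).congr (.of_forall fun x => by ring)
  calc 0 ≤ ∫ x, (∑ i ∈ s, c i * f i x) ^ 2 ∂μ := integral_nonneg fun x => sq_nonneg _
    _ = ∑ i ∈ s, ∑ j ∈ s, ∫ x, c i * f i x * (c j * f j x) ∂μ := by
      simp_rw [sq, Finset.sum_mul_sum]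
      rw [integral_finsetSum _ fun i _ => integrable_finsetSum _ fun j _ => hterm i j]
      exact Finset.sum_congr rfl fun i _ => integral_finsetSum _ fun j _ => hterm i j
    _ = ∑ i ∈ s, ∑ j ∈ s, c i * c j * ∫ x, f i x * f j x ∂μ := by
      simp_rw [← integral_const_mul]
      congr! 4 with i _ j _ x
      ring

theorem integrable_multiset_sum_map {ι : Type*} (D : Multiset ι) {f : ι → α → ℝ}
    (hf : ∀ i, Integrable (f i) μ) : Integrable (fun x => (D.map fun i => f i x).sum) μ := by
  induction D using Multiset.induction_on with
  | empty => simp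
  | cons i D ih => simpa using (hf i).fun_add ih

theorem integral_multiset_sum_map {ι : Type*} (D : Multiset ι) {f : ι → α → ℝ}
    (hf : ∀ i, Integrable (f i) μ) :
    ∫ x, (D.map fun i => f i x).sum ∂μ = (D.map fun i => ∫ x, f i x ∂μ).sum := by
  induction D using Multiset.induction_on with
  | empty => simp
  | cons i D ih =>
    simp only [Multiset.map_cons, Multiset.sum_cons]
    rw [integral_add (hf i) (integrable_multiset_sum_map D hf), ih]

end MeasureTheory

section FeatureMap

variable {V : Type*} [NormedAddCommGroup V] {σ : ℝ} {R : V → V}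

noncomputable def gaussianAt (σ : ℝ) (a x : V) : ℝ := rexp (-‖x - a‖ ^ 2 / (4 * σ))

noncomputable def reflectedGaussianAt (σ : ℝ) (R : V → V) (p x : V) : ℝ :=
  gaussianAt σ p x - gaussianAt σ (R p) x

noncomputable def persistenceFeature (σ : ℝ) (R : V → V) (D : Multiset V) (x : V) : ℝ :=
  (D.map fun p => reflectedGaussianAt σ R p x).sum

theorem reflectedGaussianAt_mul (p q x : V) :
    reflectedGaussianAt σ R p x * reflectedGaussianAt σ R q x =
      gaussianAt σ p x * reflectedGaussianAt σ R q x -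
        gaussianAt σ (R p) x * reflectedGaussianAt σ R q x :=
  sub_mul _ _ _

theorem persistenceFeature_mul (F G : Multiset V) (x : V) :
    persistenceFeature σ R F x * persistenceFeature σ R G x =
      (F.map fun p => (G.map fun q =>
        reflectedGaussianAt σ R p x * reflectedGaussianAt σ R q x).sum).sum := by
  simp only [persistenceFeature, Multiset.sum_map_mul_left, Multiset.sum_map_mul_right]

variable [InnerProductSpace ℝ V]

theorem norm_sub_sq_add_norm_sub_sq (a b x : V) :
    ‖x - a‖ ^ 2 + ‖x - b‖ ^ 2 = 2 * ‖x - midpoint ℝ a b‖ ^ 2 + ‖a - b‖ ^ 2 / 2 := by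
  have hpar := parallelogram_law_with_norm ℝ (x - a) (x - b)
  have hsum : x - a + (x - b) = (2 : ℝ) • (x - midpoint ℝ a b) := by
    rw [midpoint_eq_smul_add, invOf_eq_inv, smul_sub, smul_smul]
    norm_num
    module
  rw [hsum, sub_sub_sub_cancel_left, norm_smul, norm_sub_rev b a] at hpar
  norm_num [mul_pow] at hpar
  linarith

theorem gaussianAt_mul_gaussianAt (σ : ℝ) (a b x : V) :
    gaussianAt σ a x * gaussianAt σ b x =
      rexp (-(1 / (2 * σ)) * ‖x - midpoint ℝ a b‖ ^ 2) * rexp (-‖a - b‖ ^ 2 / (8 * σ)) := by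
  simp only [gaussianAt, ← Real.exp_add]
  congr 1
  calc -‖x - a‖ ^ 2 / (4 * σ) + -‖x - b‖ ^ 2 / (4 * σ)
      = -(‖x - a‖ ^ 2 + ‖x - b‖ ^ 2) / (4 * σ) := by ring
    _ = _ := by rw [norm_sub_sq_add_norm_sub_sq]; ring

variable [FiniteDimensional ℝ V] [MeasurableSpace V] [BorelSpace V]

theorem integrable_rexp_neg_mul_sq_norm {b : ℝ} (hb : 0 < b) :
    Integrable (fun v : V => rexp (-b * ‖v‖ ^ 2)) := by
  have h := (GaussianFourier.integrable_cexp_neg_mul_sq_norm_add (V := V) (b := (b : ℂ))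
    (by simpa using hb) 0 0).norm
  refine h.congr (.of_forall fun v => ?_)
  dsimp only
  rw [Complex.norm_exp]
  norm_num [← Complex.ofReal_pow]

theorem integrable_gaussianAt_mul (hσ : 0 < σ) (a b : V) :
    Integrable (fun x => gaussianAt σ a x * gaussianAt σ b x) := by
  have h := ((integrable_rexp_neg_mul_sq_norm (V := V) (b := 1 / (2 * σ))
    (by positivity)).comp_sub_right (midpoint ℝ a b)).mul_const (rexp (-‖a - b‖ ^ 2 / (8 * σ)))
  exact h.congr (.of_forall fun x => (gaussianAt_mul_gaussianAt σ a b x).symm)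

theorem integral_gaussianAt_mul (hσ : 0 < σ) (a b : V) :
    ∫ x, gaussianAt σ a x * gaussianAt σ b x =
      (2 * π * σ) ^ (Module.finrank ℝ V / 2 : ℝ) * rexp (-‖a - b‖ ^ 2 / (8 * σ)) := by
  simp_rw [gaussianAt_mul_gaussianAt]
  rw [integral_mul_const,
    integral_sub_right_eq_self (fun y : V => rexp (-(1 / (2 * σ)) * ‖y‖ ^ 2)),
    GaussianFourier.integral_rexp_neg_mul_sq_norm (by positivity)]
  congr 2
  field_simp

theorem integrable_gaussianAt_mul_reflectedGaussianAt (hσ : 0 < σ) (a q : V) :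
    Integrable (fun x => gaussianAt σ a x * reflectedGaussianAt σ R q x) := by
  simp_rw [reflectedGaussianAt, mul_sub]
  exact (integrable_gaussianAt_mul hσ a q).sub (integrable_gaussianAt_mul hσ a (R q))

theorem integral_gaussianAt_mul_reflectedGaussianAt (hσ : 0 < σ) (a q : V) :
    ∫ x, gaussianAt σ a x * reflectedGaussianAt σ R q x =
      (2 * π * σ) ^ (Module.finrank ℝ V / 2 : ℝ) *
        (rexp (-‖a - q‖ ^ 2 / (8 * σ)) - rexp (-‖a - R q‖ ^ 2 / (8 * σ))) := by
  simp_rw [reflectedGaussianAt, mul_sub]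
  rw [integral_sub (integrable_gaussianAt_mul hσ a q) (integrable_gaussianAt_mul hσ a (R q)),
    integral_gaussianAt_mul hσ, integral_gaussianAt_mul hσ]

theorem integrable_reflectedGaussianAt_mul (hσ : 0 < σ) (p q : V) :
    Integrable (fun x => reflectedGaussianAt σ R p x * reflectedGaussianAt σ R q x) := by
  simp_rw [reflectedGaussianAt_mul]
  exact (integrable_gaussianAt_mul_reflectedGaussianAt hσ p q).sub
    (integrable_gaussianAt_mul_reflectedGaussianAt hσ (R p) q)

theorem integral_reflectedGaussianAt_mul (hσ : 0 < σ) (hR : Isometry R)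
    (hR' : Function.Involutive R) (p q : V) :
    ∫ x, reflectedGaussianAt σ R p x * reflectedGaussianAt σ R q x =
      2 * (2 * π * σ) ^ (Module.finrank ℝ V / 2 : ℝ) *
        (rexp (-‖p - q‖ ^ 2 / (8 * σ)) - rexp (-‖p - R q‖ ^ 2 / (8 * σ))) := by
  have hRR : ∀ a b, ‖R a - R b‖ = ‖a - b‖ := fun a b => by
    rw [← dist_eq_norm, ← dist_eq_norm, hR.dist_eq]
  have hRq : ‖R p - q‖ = ‖p - R q‖ := by rw [← hRR p (R q), hR' q]
  simp_rw [reflectedGaussianAt_mul]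
  rw [integral_sub (integrable_gaussianAt_mul_reflectedGaussianAt hσ p q)
      (integrable_gaussianAt_mul_reflectedGaussianAt hσ (R p) q),
    integral_gaussianAt_mul_reflectedGaussianAt hσ, integral_gaussianAt_mul_reflectedGaussianAt hσ,
    hRR, hRq]
  ring

theorem integrable_persistenceFeature_mul (hσ : 0 < σ) (F G : Multiset V) :
    Integrable (fun x => persistenceFeature σ R F x * persistenceFeature σ R G x) := by
  simp_rw [persistenceFeature_mul]
  exact integrable_multiset_sum_map F fun p => integrable_multiset_sum_map G fun q =>
    integrable_reflectedGaussianAt_mul hσ p q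

theorem integral_persistenceFeature_mul (hσ : 0 < σ) (hR : Isometry R)
    (hR' : Function.Involutive R) (F G : Multiset V) :
    ∫ x, persistenceFeature σ R F x * persistenceFeature σ R G x =
      2 * (2 * π * σ) ^ (Module.finrank ℝ V / 2 : ℝ) *
        (F.map fun p => (G.map fun q =>
          rexp (-‖p - q‖ ^ 2 / (8 * σ)) - rexp (-‖p - R q‖ ^ 2 / (8 * σ))).sum).sum := by
  simp_rw [persistenceFeature_mul]
  rw [integral_multiset_sum_map F fun p => integrable_multiset_sum_map G fun q =>
    integrable_reflectedGaussianAt_mul hσ p q]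
  simp_rw [integral_multiset_sum_map G fun q => integrable_reflectedGaussianAt_mul hσ _ q,
    integral_reflectedGaussianAt_mul hσ hR hR', Multiset.sum_map_mul_left]

end FeatureMap

theorem isometry_pbar : Isometry pbar :=
  Isometry.of_dist_eq fun p q => by
    simp only [EuclideanSpace.dist_eq, Fin.sum_univ_two, pbar, mk2]
    simp [add_comm]

theorem pbar_involutive : Function.Involutive pbar := fun p => by
  ext i
  fin_cases i <;> simp [pbar, mk2]

theorem kPSS_eq_integral_persistenceFeature_mul {σ : ℝ} (hσ : 0 < σ)
    (F G : Multiset (EuclideanSpace ℝ (Fin 2))) :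
    kPSS σ F G = (32 * π ^ 2 * σ ^ 2)⁻¹ *
      ∫ x, persistenceFeature σ pbar F x * persistenceFeature σ pbar G x := by
  rw [integral_persistenceFeature_mul hσ isometry_pbar pbar_involutive, finrank_euclideanSpace_fin,
    kPSS]
  norm_num
  field_simp
  ring

/-- the persistence scale space kernel is positive definite. -/
theorem kPSS_posdef (σ : ℝ) (hσ : 0 < σ) (m : ℕ)
    (F : Fin m → Multiset (EuclideanSpace ℝ (Fin 2))) (c : Fin m → ℝ) :
    0 ≤ ∑ i, ∑ j, c i * c j * kPSS σ (F i) (F j) := by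
  have hgram := sum_sum_mul_integral_mul_nonneg (μ := volume) Finset.univ
    (fun i => persistenceFeature σ pbar (F i)) c
    (fun i j => integrable_persistenceFeature_mul hσ (F i) (F j))
  calc 0 ≤ (32 * π ^ 2 * σ ^ 2)⁻¹ * ∑ i, ∑ j, c i * c j *
        ∫ x, persistenceFeature σ pbar (F i) x * persistenceFeature σ pbar (F j) x :=
      mul_nonneg (by positivity) hgram
    _ = ∑ i, ∑ j, c i * c j * kPSS σ (F i) (F j) := by
      simp_rw [kPSS_eq_integral_persistenceFeature_mul hσ, Finset.mul_sum]
      congr! 2 with i _ j _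
      ring
end
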